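/- Let p be a prime and d ≥ 2 an integer. Write d = d_p · d_{p'} where d_p is the largest power of p dividing d and d_{p'} = d/d_p. Then μ*(d,p) = μ*(d_p, p) + μ*(d_{p'}, p). -/

import Mathlib

/-!
Upper bound: the direct sum of optimal examples for the coprime orders `d_p` and `d_{p'}` has
order `d_p * d_{p'}`, and the ranks of `x - 1` add up.

Lower bound: let `x` have order `P * m` with `P = d_p`, `m = d_{p'}`. The fixed space of `x` lies
in `Fix (x ^ m) ∩ Fix (x ^ P)`, so by rank–nullity `rank (x - 1)` is at least
`rank (x ^ m - 1)` plus the rank of `x ^ P - 1` on `Fix (x ^ m)`. Here `x ^ m` has order `P`, and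
`x ^ P` still has order `m` on `Fix (x ^ m)`: if `x ^ (P * j)` fixes `Fix (x ^ m)` pointwise,
then `T = x ^ (P * j) - 1`, whose kernel and range are disjoint because its order is prime to `p`,
commutes with the nilpotent `x ^ m - 1` and vanishes on its kernel, which forces `T = 0`.
-/

open Module

/-- `μ*(d,p)`: the smallest dimension of `[V,x] = range (x - id)` over all linear
automorphisms `x` of order exactly `d` of finite-dimensional vector spaces over `𝔽_p`
(with the convention `μ*(1,p) = 0`). -/
noncomputable def mustar (p d : ℕ) : ℕ :=
  sInf {μ : ℕ | ∃ (n : ℕ) (x : (Fin n → ZMod p) ≃ₗ[ZMod p] (Fin n → ZMod p)),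
    orderOf x = d ∧
    finrank (ZMod p) (LinearMap.range
      ((x : (Fin n → ZMod p) →ₗ[ZMod p] (Fin n → ZMod p)) - LinearMap.id)) = μ}

open LinearMap Polynomial

theorem LinearEquiv.orderOf_toLinearMap {R M : Type*} [Semiring R] [AddCommMonoid M] [Module R M]
    (x : M ≃ₗ[R] M) : orderOf (x : Module.End R M) = orderOf x :=
  orderOf_injective LinearEquiv.automorphismGroup.toLinearMapMonoidHom
    LinearEquiv.toLinearMap_injective x

theorem LinearMap.orderOf_prodMap {R M N : Type*} [CommSemiring R] [AddCommMonoid M]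
    [AddCommMonoid N] [Module R M] [Module R N] (f : End R M) (g : End R N) :
    orderOf (f.prodMap g) = (orderOf f).lcm (orderOf g) := by
  have hinj : Function.Injective (prodMapAlgHom R M N) := fun f g h =>
    Prod.ext (LinearMap.ext fun v => congrArg Prod.fst (LinearMap.congr_fun h (v, 0)))
      (LinearMap.ext fun w => congrArg Prod.snd (LinearMap.congr_fun h (0, w)))
  exact (orderOf_injective (prodMapAlgHom R M N).toMonoidHom hinj (f, g)).trans (Prod.orderOf _)

theorem Submodule.finrank_prod {K M N : Type*} [Field K] [AddCommGroup M] [AddCommGroup N]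
    [Module K M] [Module K N] [FiniteDimensional K M] [FiniteDimensional K N]
    (A : Submodule K M) (B : Submodule K N) :
    finrank K (A.prod B) = finrank K A + finrank K B := by
  let e : A.prod B ≃ₗ[K] A × B :=
    { toFun v := (⟨v.1.1, v.2.1⟩, ⟨v.1.2, v.2.2⟩)
      invFun w := ⟨(w.1, w.2), w.1.2, w.2.2⟩
      map_add' _ _ := rfl
      map_smul' _ _ := rfl
      left_inv _ := rfl
      right_inv _ := rfl }
  rw [e.finrank_eq, Module.finrank_prod]

section Ring

variable {R M : Type*} [Ring R] [AddCommGroup M] [Module R M]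

theorem ker_sub_one_le_ker_pow_sub_one (f : End R M) (k : ℕ) :
    ker (f - 1) ≤ ker (f ^ k - 1) := by
  rw [← geom_sum_mul]
  exact ker_le_ker_comp _ _

theorem eq_zero_of_ker_le_ker_of_isNilpotent {T N : End R M} (hTN : Commute T N)
    (hN : IsNilpotent N) (hT : Disjoint (ker T) (range T)) (hker : ker N ≤ ker T) : T = 0 := by
  obtain ⟨k, hk⟩ := hN
  have key : ∀ i, ∀ w ∈ range T, (N ^ i) w = 0 → w = 0 := by
    intro i
    induction i with
    | zero => intro w _ hw; simpa using hw
    | succ i ih =>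
      intro w hw hNw
      have hNw_range : N w ∈ range T := by
        obtain ⟨u, rfl⟩ := hw
        exact ⟨N u, by rw [← Module.End.mul_apply, hTN.eq, Module.End.mul_apply]⟩
      have hNw0 : N w = 0 := ih _ hNw_range (by rwa [← Module.End.mul_apply, ← pow_succ])
      exact Submodule.disjoint_def.mp hT w (hker hNw0) hw
  ext v
  exact key k (T v) (mem_range_self T v) (by rw [hk]; rfl)

end Ring

section Field

variable {K V : Type*} [Field K] [AddCommGroup V] [Module K V]

theorem disjoint_ker_sub_one_range_sub_one {f : End K V} {m : ℕ} (hm : (m : K) ≠ 0)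
    (hf : f ^ m = 1) : Disjoint (ker (f - 1)) (range (f - 1)) := by
  rw [Submodule.disjoint_def]
  rintro v hv ⟨w, hw⟩
  have hfix : ∀ i, (f ^ i) v = v := fun i => sub_eq_zero.mp (ker_sub_one_le_ker_pow_sub_one f i hv)
  have hsum : (m : K) • v = 0 := by
    calc (m : K) • v = (∑ i ∈ Finset.range m, f ^ i) v := by
          simp [LinearMap.sum_apply, hfix, Nat.cast_smul_eq_nsmul]
      _ = 0 := by rw [← hw, ← Module.End.mul_apply, geom_sum_mul, hf, sub_self]; rfl
  exact (smul_eq_zero.mp hsum).resolve_left hm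

theorem sub_one_pow_char_pow {p : ℕ} [Fact p.Prime] [CharP K p] (f : End K V) (a : ℕ) :
    (f - 1) ^ p ^ a = f ^ p ^ a - 1 := by
  simpa using congrArg (aeval f) (sub_pow_char_pow (X : K[X]) 1 a)

theorem dvd_of_ker_pow_sub_one_le_ker {p : ℕ} [Fact p.Prime] [CharP K p] {x : End K V}
    {a m j : ℕ} (hx : orderOf x = p ^ a * m) (hm : (m : K) ≠ 0)
    (h : ker (x ^ m - 1) ≤ ker (x ^ (p ^ a * j) - 1)) : m ∣ j := by
  have hxd : x ^ (p ^ a * m) = 1 := hx ▸ pow_orderOf_eq_one x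
  have hcomm : Commute (x ^ (p ^ a * j) - 1) (x ^ m - 1) :=
    ((Commute.pow_pow_self x _ _).sub_left (Commute.one_left _)).sub_right (Commute.one_right _)
  have hnil : IsNilpotent (x ^ m - 1) := ⟨p ^ a, by
    rw [sub_one_pow_char_pow, ← pow_mul, mul_comm, hxd, sub_self]⟩
  have hdisj := disjoint_ker_sub_one_range_sub_one hm (f := x ^ (p ^ a * j)) (by
    rw [← pow_mul, mul_right_comm, pow_mul, hxd, one_pow])
  have hxj : x ^ (p ^ a * j) = 1 :=
    sub_eq_zero.mp (eq_zero_of_ker_le_ker_of_isNilpotent hcomm hnil hdisj h)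
  have hP : 0 < p ^ a := pow_pos (Fact.out : p.Prime).pos a
  exact Nat.dvd_of_mul_dvd_mul_left hP (hx ▸ orderOf_dvd_of_pow_eq_one hxj)

theorem finrank_range_add_finrank_range_restrict_le [FiniteDimensional K V] {h f g : End K V}
    (hg : ∀ v ∈ ker f, g v ∈ ker f) (hhf : ker h ≤ ker f) (hhg : ker h ≤ ker g) :
    finrank K (range f) + finrank K (range (g.restrict hg)) ≤ finrank K (range h) := by
  have hker : finrank K (ker h) ≤ finrank K (ker (g.restrict hg)) := by
    rw [← (Submodule.comapSubtypeEquivOfLe hhf).finrank_eq, ker_restrict]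
    exact Submodule.finrank_mono (Submodule.comap_mono hhg)
  have := finrank_range_add_finrank_ker h
  have := finrank_range_add_finrank_ker f
  have := finrank_range_add_finrank_ker (g.restrict hg)
  omega

end Field

def mustarSet (p d : ℕ) : Set ℕ :=
  {μ : ℕ | ∃ (n : ℕ) (x : (Fin n → ZMod p) ≃ₗ[ZMod p] (Fin n → ZMod p)),
    orderOf x = d ∧
    finrank (ZMod p) (LinearMap.range
      ((x : (Fin n → ZMod p) →ₗ[ZMod p] (Fin n → ZMod p)) - LinearMap.id)) = μ}

section ZMod

variable {p : ℕ} [Fact p.Prime] {V : Type*} [AddCommGroup V] [Module (ZMod p) V]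
  [FiniteDimensional (ZMod p) V]

theorem finrank_range_sub_one_mem_mustarSet {f : End (ZMod p) V} (hf : IsOfFinOrder f) :
    finrank (ZMod p) (range (f - 1)) ∈ mustarSet p (orderOf f) := by
  let e := (Module.finBasis (ZMod p) V).equivFun
  obtain ⟨u, hu⟩ := hf.isUnit.map e.conjRingEquiv
  let x := GeneralLinearGroup.generalLinearEquiv (ZMod p) _ u
  have hx : (x : End (ZMod p) _) = e.conjRingEquiv f := by
    ext1 v; simp [x, ← hu]
  refine ⟨_, x, ?_, ?_⟩
  · rw [← LinearEquiv.orderOf_toLinearMap, hx]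
    exact MulEquiv.orderOf_eq e.conjRingEquiv.toMulEquiv f
  · rw [← Module.End.one_eq_id, hx, ← map_one e.conjRingEquiv, ← map_sub]
    have hconj : e.conjRingEquiv (f - 1) = (e : V →ₗ[ZMod p] _) ∘ₗ (f - 1) ∘ₗ e.symm := by
      refine LinearMap.ext fun v => ?_
      rw [map_sub, map_one]
      simp
    rw [hconj, range_comp, range_comp_of_range_eq_top _ e.symm.range, e.finrank_map_eq]

theorem mustar_le_finrank_range_sub_one {f : End (ZMod p) V} (hf : IsOfFinOrder f) :
    mustar p (orderOf f) ≤ finrank (ZMod p) (range (f - 1)) :=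
  Nat.sInf_le (finrank_range_sub_one_mem_mustarSet hf)

theorem mustar_mem_mustarSet {d : ℕ} (hd : 0 < d) : mustar p d ∈ mustarSet p d := by
  have : NeZero d := ⟨hd.ne'⟩
  let f := Algebra.lmul (ZMod p) (MonoidAlgebra (ZMod p) (Multiplicative (ZMod d)))
    (MonoidAlgebra.of _ _ (Multiplicative.ofAdd 1))
  have hf : orderOf f = d :=
    calc orderOf f = orderOf (Multiplicative.ofAdd (1 : ZMod d)) :=
          (orderOf_injective (Algebra.lmul _ _).toMonoidHom Algebra.lmul_injective _).trans
            (orderOf_injective _ MonoidAlgebra.of_injective _)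
      _ = d := by rw [orderOf_ofAdd_eq_addOrderOf, ZMod.addOrderOf_one]
  have hmem := finrank_range_sub_one_mem_mustarSet (orderOf_pos_iff.mp (hf ▸ hd))
  rw [hf] at hmem
  exact Nat.sInf_mem ⟨_, hmem⟩

theorem mustar_mul_le {a b : ℕ} (ha : 0 < a) (hb : 0 < b) (hab : a.Coprime b) :
    mustar p (a * b) ≤ mustar p a + mustar p b := by
  obtain ⟨n₁, x₁, hx₁, hr₁⟩ := mustar_mem_mustarSet (p := p) ha
  obtain ⟨n₂, x₂, hx₂, hr₂⟩ := mustar_mem_mustarSet (p := p) hb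
  let f := (x₁ : End (ZMod p) (Fin n₁ → ZMod p)).prodMap (x₂ : End (ZMod p) (Fin n₂ → ZMod p))
  have hf : orderOf f = a * b := by
    rw [orderOf_prodMap, LinearEquiv.orderOf_toLinearMap, LinearEquiv.orderOf_toLinearMap, hx₁,
      hx₂, hab.lcm_eq_mul]
  have hrange : range (f - 1) = (range ((x₁ : End (ZMod p) (Fin n₁ → ZMod p)) - LinearMap.id)).prod
      (range ((x₂ : End (ZMod p) (Fin n₂ → ZMod p)) - LinearMap.id)) := by
    rw [← range_prodMap]
    rfl
  calc mustar p (a * b) ≤ finrank (ZMod p) (range (f - 1)) :=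
        hf ▸ mustar_le_finrank_range_sub_one (orderOf_pos_iff.mp (hf ▸ Nat.mul_pos ha hb))
    _ = mustar p a + mustar p b := by rw [hrange, Submodule.finrank_prod, hr₁, hr₂]

theorem mustar_add_mustar_le_finrank_range_sub_one {x : End (ZMod p) V} {a m : ℕ}
    (hx : orderOf x = p ^ a * m) (hm : ¬ p ∣ m) :
    mustar p (p ^ a) + mustar p m ≤ finrank (ZMod p) (range (x - 1)) := by
  have hm0 : 0 < m := Nat.pos_of_ne_zero (by rintro rfl; exact hm (dvd_zero p))
  have hmK : (m : ZMod p) ≠ 0 := by rwa [Ne, ZMod.natCast_eq_zero_iff]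
  have hP : 0 < p ^ a := pow_pos (Fact.out : p.Prime).pos a
  have hu : orderOf (x ^ m) = p ^ a := by
    rw [orderOf_pow_of_dvd hm0.ne' (hx ▸ dvd_mul_left _ _), hx, Nat.mul_div_cancel _ hm0]
  have hW : ∀ v ∈ ker (x ^ m - 1), (x ^ p ^ a) v ∈ ker (x ^ m - 1) := by
    intro v hv
    rw [mem_ker, ← Module.End.mul_apply,
      ((Commute.pow_pow_self x _ _).sub_left (Commute.one_left _)).eq, Module.End.mul_apply,
      hv, map_zero]
  let s := (x ^ p ^ a).restrict hW
  have hs : orderOf s = m := by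
    refine Nat.dvd_antisymm (orderOf_dvd_of_pow_eq_one ?_)
      (dvd_of_ker_pow_sub_one_le_ker hx hmK fun v hv => ?_)
    · ext v
      simp [s, Module.End.pow_restrict, ← pow_mul, hx ▸ pow_orderOf_eq_one x]
    · rw [mem_ker, LinearMap.sub_apply, Module.End.one_apply, sub_eq_zero, pow_mul]
      have := LinearMap.congr_fun (pow_orderOf_eq_one s) ⟨v, hv⟩
      rw [Module.End.pow_restrict] at this
      exact congrArg Subtype.val this
  have hW' : ∀ v ∈ ker (x ^ m - 1), (x ^ p ^ a - 1) v ∈ ker (x ^ m - 1) :=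
    fun v hv => Submodule.sub_mem _ (hW v hv) hv
  have hs1 : s - 1 = (x ^ p ^ a - 1).restrict hW' := by
    ext
    simp [s]
  have hμu := mustar_le_finrank_range_sub_one (orderOf_pos_iff.mp (hu ▸ hP))
  have hμs := mustar_le_finrank_range_sub_one (orderOf_pos_iff.mp (hs ▸ hm0))
  rw [hu] at hμu
  rw [hs] at hμs
  calc mustar p (p ^ a) + mustar p m
      ≤ finrank (ZMod p) (range (x ^ m - 1)) + finrank (ZMod p) (range (s - 1)) :=
        add_le_add hμu hμs
    _ ≤ finrank (ZMod p) (range (x - 1)) := by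
      rw [hs1]
      exact finrank_range_add_finrank_range_restrict_le hW' (ker_sub_one_le_ker_pow_sub_one x m)
        (ker_sub_one_le_ker_pow_sub_one x _)

end ZMod

/-- `μ*(d,p) = μ*(d_p,p) + μ*(d_{p'},p)` where `d_p` is the `p`-part of `d` and
`d_{p'} = d / d_p` is the `p'`-part. -/
theorem mustar_p_part_decomposition (p d : ℕ) (hp : p.Prime) (hd : 2 ≤ d) :
    mustar p d = mustar p (p ^ (d.factorization p)) + mustar p (d / p ^ (d.factorization p)) := by
  have : Fact p.Prime := ⟨hp⟩
  have hd0 : d ≠ 0 := by omega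
  have hdPm : d = p ^ d.factorization p * (d / p ^ d.factorization p) :=
    (Nat.mul_div_cancel' (Nat.ordProj_dvd d p)).symm
  refine le_antisymm ?_ ?_
  · conv_lhs => rw [hdPm]
    exact mustar_mul_le (Nat.ordProj_pos d p) (Nat.ordCompl_pos p hd0)
      ((Nat.coprime_ordCompl hp hd0).pow_left _)
  · obtain ⟨n, x, hx, hr⟩ := mustar_mem_mustarSet (p := p) (Nat.pos_of_ne_zero hd0)
    rw [← hr, ← Module.End.one_eq_id]
    exact mustar_add_mustar_le_finrank_range_sub_one
      (by rw [LinearEquiv.orderOf_toLinearMap, hx, ← hdPm]) (Nat.not_dvd_ordCompl hp hd0)
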